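/- Let C be the 5×5 integer matrix with rows [4,1,2,2,0], [1,3,2,0,1], [2,2,4,1,2], [2,0,1,3,0], [0,1,2,0,2], and let D₀ be the 8×5 matrix over the nonnegative integers with rows [1,0,0,0,0], [0,1,0,0,0], [1,1,1,0,0], [1,0,0,1,0], [0,0,0,1,0], [1,0,1,1,0], [0,0,1,0,1], [0,1,1,0,1]. Then for every 8×5 matrix D with nonnegative integer entries, the equation Dᵀ·D = C holds if and only if there exists a permutation σ of the 8 row indices such that D(i,j) = D₀(σ(i),j) for all i,j. In particular, up to a permutation of rows, D₀ is the unique nonnegative integer solution of Dᵀ·D = C. -/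

import Mathlib

def stmt6C : Matrix (Fin 5) (Fin 5) ℤ :=
  !![4, 1, 2, 2, 0;
    1, 3, 2, 0, 1;
    2, 2, 4, 1, 2;
    2, 0, 1, 3, 0;
    0, 1, 2, 0, 2]

def stmt6D0 : Matrix (Fin 8) (Fin 5) ℤ :=
  !![1, 0, 0, 0, 0;
    0, 1, 0, 0, 0;
    1, 1, 1, 0, 0;
    1, 0, 0, 1, 0;
    0, 0, 0, 1, 0;
    1, 0, 1, 1, 0;
    0, 0, 1, 0, 1;
    0, 1, 1, 0, 1]

/-!
A column of a solution `D` has squared norm at most 4, and an entry 2 would make it `2 eᵢ`, whose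
inner products with the other columns are all even; as every column of `C` has an odd
off-diagonal entry, `D` is a 0/1 matrix. For any matrix `Y`, the sum `∑ᵢ rᵢᵀ Y rᵢ` over the
rows `rᵢ` of `D` equals `∑ⱼₖ Yⱼₖ Cⱼₖ`. For a suitable `Y` the quadratic function
`q(r) = rᵀ Y r + 1` is nonnegative on 0/1 vectors and vanishes exactly on the eight rows of `D₀`,
while `∑ᵢ q(rᵢ) = ∑ⱼₖ Yⱼₖ Cⱼₖ + 8 = 0`; hence every row of `D` is a row of `D₀`. Finally the
rank-one matrices `r rᵀ` over the rows `r` of `D₀` are linearly independent, so `C` determines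
the multiplicity of each row, which is therefore 1.
-/

open Finset Matrix

theorem Matrix.sum_dotProduct_mulVec_self {m n : Type*} [Fintype m] [Fintype n]
    (D : Matrix m n ℤ) (Y : Matrix n n ℤ) :
    ∑ i, D i ⬝ᵥ (Y *ᵥ D i) = ∑ j, ∑ k, Y j k * (Dᵀ * D) j k := by
  simp only [dotProduct, mulVec, mul_apply, transpose_apply, mul_sum]
  rw [sum_comm]
  refine sum_congr rfl fun j _ => ?_
  rw [sum_comm]
  exact sum_congr rfl fun k _ => sum_congr rfl fun i _ => by ring

theorem Matrix.transpose_mul_self_submatrix {l m n : Type*} [Fintype l] [Fintype m]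
    [DecidableEq m] (A : Matrix m n ℤ) (σ : l → m) :
    (A.submatrix σ id)ᵀ * A.submatrix σ id =
      Aᵀ * diagonal (fun k => (#{i | σ i = k} : ℤ)) * A := by
  ext j k
  simp only [mul_apply, transpose_apply, submatrix_apply, id, diagonal_apply, mul_ite, mul_zero,
    sum_ite_eq', mem_univ, if_true]
  rw [← sum_fiberwise' univ σ fun x => A x j * A x k]
  refine sum_congr rfl fun x _ => ?_
  rw [sum_const, nsmul_eq_mul]
  ring

theorem le_one_of_sum_mul_self_le_four_of_odd {ι : Type*} [Fintype ι] [DecidableEq ι]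
    {a b : ι → ℤ} (hsq : ∑ i, a i * a i ≤ 4) (hodd : Odd (∑ i, a i * b i)) (i : ι) :
    a i ≤ 1 := by
  by_contra! hi
  have hsplit := add_sum_erase univ (fun k => a k * a k) (mem_univ i)
  have hrest : ∀ k ∈ univ.erase i, a k * a k = 0 := by
    refine (sum_eq_zero_iff_of_nonneg fun k _ => mul_self_nonneg (a k)).mp ?_
    nlinarith [sum_nonneg fun k (_ : k ∈ univ.erase i) => mul_self_nonneg (a k)]
  have hai : a i = 2 := by
    rw [sum_eq_zero hrest] at hsplit
    nlinarith
  rw [← add_sum_erase univ _ (mem_univ i), sum_eq_zero fun k hk => by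
    rw [mul_self_eq_zero.mp (hrest k hk), zero_mul], hai, add_zero] at hodd
  exact Int.not_even_iff_odd.mpr hodd ⟨b i, by ring⟩

theorem exists_eq_toInt_of_zero_or_one {ι : Type*} {r : ι → ℤ} (hr : ∀ j, r j = 0 ∨ r j = 1) :
    ∃ v : ι → Bool, r = fun j => (v j).toInt :=
  ⟨fun j => r j = 1, funext fun j => by rcases hr j with h | h <;> simp [h]⟩

theorem stmt6D0_transpose_mul_self : stmt6D0ᵀ * stmt6D0 = stmt6C := by
  decide

theorem stmt6_entry_zero_or_one {D : Matrix (Fin 8) (Fin 5) ℤ} (hD : ∀ i j, 0 ≤ D i j)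
    (hG : Dᵀ * D = stmt6C) (i : Fin 8) (j : Fin 5) : D i j = 0 ∨ D i j = 1 := by
  have gram : ∀ j k, ∑ i, D i j * D i k = stmt6C j k := fun j k => by
    simp [← hG, mul_apply]
  have hdiag : ∀ j, stmt6C j j ≤ 4 := by decide
  have hodd : ∀ j, ∃ k, stmt6C j k % 2 = 1 := by decide
  obtain ⟨k, hk⟩ := hodd j
  have := le_one_of_sum_mul_self_le_four_of_odd (a := fun i => D i j) (b := fun i => D i k)
    ((gram j j).trans_le (hdiag j)) ((gram j k).symm ▸ Int.odd_iff.mpr hk) i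
  have := hD i j
  omega

/-- The coefficients are a dual certificate of the linear program whose unknowns are the
multiplicities of the 32 possible 0/1 rows. -/
def separatingForm : Matrix (Fin 5) (Fin 5) ℤ :=
  !![-1, 2, -2, 1, 4;
    0, -1, -2, 2, 3;
    0, 0, 3, -1, -4;
    0, 0, 0, -1, 3;
    0, 0, 0, 0, 0]

def separatingFn (r : Fin 5 → ℤ) : ℤ := r ⬝ᵥ (separatingForm *ᵥ r) + 1

theorem separatingFn_nonneg {r : Fin 5 → ℤ} (hr : ∀ j, r j = 0 ∨ r j = 1) :
    0 ≤ separatingFn r := by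
  obtain ⟨v, rfl⟩ := exists_eq_toInt_of_zero_or_one hr
  clear hr
  revert v
  decide

theorem exists_row_eq_of_separatingFn_eq_zero {r : Fin 5 → ℤ} (hr : ∀ j, r j = 0 ∨ r j = 1)
    (h : separatingFn r = 0) : ∃ m, stmt6D0 m = r := by
  obtain ⟨v, rfl⟩ := exists_eq_toInt_of_zero_or_one hr
  clear hr
  suffices ∃ m, (fun j => stmt6D0 m j) = fun j => (v j).toInt from this
  revert v
  decide

theorem stmt6_exists_row_eq {D : Matrix (Fin 8) (Fin 5) ℤ} (h01 : ∀ i j, D i j = 0 ∨ D i j = 1)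
    (hG : Dᵀ * D = stmt6C) (i : Fin 8) : ∃ m, stmt6D0 m = D i := by
  have hsum : ∑ i, separatingFn (D i) = 0 := by
    simp only [separatingFn, sum_add_distrib, Matrix.sum_dotProduct_mulVec_self, hG]
    decide
  exact exists_row_eq_of_separatingFn_eq_zero (h01 i)
    ((sum_eq_zero_iff_of_nonneg fun i _ => separatingFn_nonneg (h01 i)).mp hsum i (mem_univ i))

theorem stmt6D0_transpose_mul_diagonal_mul_injective :
    Function.Injective fun x : Fin 8 → ℤ => stmt6D0ᵀ * diagonal x * stmt6D0 := by
  intro x y h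
  have e := fun j k => congrFun (congrFun h j) k
  simp only [mul_apply, transpose_apply, Fin.sum_univ_eight, stmt6D0] at e
  -- these entries determine `x 7, x 6, x 2, x 5, x 3, x 4, x 1, x 0` in turn
  have e14 := e 1 4
  have e44 := e 4 4
  have e01 := e 0 1
  have e23 := e 2 3
  have e03 := e 0 3
  have e33 := e 3 3
  have e11 := e 1 1
  have e00 := e 0 0
  simp at e14 e44 e01 e23 e03 e33 e11 e00
  funext m
  fin_cases m <;> simp <;> linarith

theorem stmt6_card_fiber_eq_one {σ : Fin 8 → Fin 8}
    (h : (stmt6D0.submatrix σ id)ᵀ * stmt6D0.submatrix σ id = stmt6C) (k : Fin 8) :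
    #{i | σ i = k} = 1 := by
  have hfib : (fun k => (#{i | σ i = k} : ℤ)) = 1 := by
    apply stmt6D0_transpose_mul_diagonal_mul_injective
    change stmt6D0ᵀ * diagonal _ * stmt6D0 = stmt6D0ᵀ * diagonal 1 * stmt6D0
    rw [← transpose_mul_self_submatrix, h, diagonal_one', Matrix.mul_one, stmt6D0_transpose_mul_self]
  exact_mod_cast (congrFun hfib k).trans (Pi.one_apply k)

theorem stmt6 (D : Matrix (Fin 8) (Fin 5) ℤ) (hD : ∀ i j, 0 ≤ D i j) :
    D.transpose * D = stmt6C ↔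
      ∃ σ : Equiv.Perm (Fin 8), ∀ i j, D i j = stmt6D0 (σ i) j := by
  constructor
  · intro hG
    choose σ hσ using stmt6_exists_row_eq (stmt6_entry_zero_or_one hD hG) hG
    have hD_eq : D = stmt6D0.submatrix σ id := ext fun i j => by simp [← hσ i]
    have hsurj : Function.Surjective σ := fun k => by
      have := stmt6_card_fiber_eq_one (hD_eq ▸ hG) k
      obtain ⟨i, hi⟩ := card_pos.mp (this ▸ Nat.one_pos)
      exact ⟨i, (mem_filter.mp hi).2⟩
    exact ⟨Equiv.ofBijective σ hsurj.bijective_of_finite, fun i j => by simp [← hσ i]⟩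
  · rintro ⟨σ, hσ⟩
    have hD_eq : D = stmt6D0.submatrix σ id := ext hσ
    rw [hD_eq, transpose_submatrix, submatrix_mul_equiv, submatrix_id_id,
      stmt6D0_transpose_mul_self]
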